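/- arXiv:2404.01142 — 3 statements merged into one kernel-verified Lean document; each statement's English description precedes it below -/
import Mathlib

section
/- For constants C > 0, δ > 0, and b ∈ ℝ, the integral ∫₀^δ e^{-rt} t^b e^{-C/t} dt is asymptotically equivalent to √(π C^{(2b+1)/2}) · r^{(-2b-3)/4} · e^{-√(4Cr)} as r → ∞. -/
/-!
Substituting `t = s (1 + v / a)` with `s = √(C / r)` and `a = (C r) ^ (1 / 4)` turns
`r t + C / t` into `2 a² + v² / (1 + v / a)`, so the integral equals
`s ^ (b + 1) e^{-2a²} / a` times the integral of `(1 + v / a) ^ b e^{-v² / (1 + v / a)}` over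
`(-a, a (δ / s - 1))`. As `r → ∞` this integrand tends to `e^{-v²}` and, once `a ≥ 1`, it is
dominated by a Gaussian for `v ≤ 0` and by an exponential for `v > 0`; dominated convergence
gives `√π`, which is exactly the remaining factor of the normalization.
-/

open MeasureTheory Real Filter Set Topology

lemma rpow_mul_exp_neg_mul_le {x B c : ℝ} (hx : 0 ≤ x) (hB : 0 ≤ B) (hc : 0 < c) :
    x ^ B * exp (-(c * x)) ≤ ((B + 1) / c) ^ B := by
  set y := c * x / (B + 1) with hy_def
  have hy : 0 ≤ y := by positivity
  have hxy : x ^ B = ((B + 1) / c) ^ B * y ^ B := by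
    rw [← mul_rpow (by positivity) hy, hy_def]
    field_simp
  have hyB : y ^ B ≤ exp (c * x) :=
    calc y ^ B ≤ exp y ^ B := rpow_le_rpow hy (by linarith [add_one_le_exp y]) hB
      _ = exp (c * x * (B / (B + 1))) := by rw [← exp_mul, hy_def]; ring_nf
      _ ≤ exp (c * x) :=
        exp_le_exp.2 <| mul_le_of_le_one_right (by positivity) <|
          div_le_one_of_le₀ (by linarith) (by linarith)
  calc x ^ B * exp (-(c * x)) = ((B + 1) / c) ^ B * (y ^ B * exp (-(c * x))) := by rw [hxy]; ring
    _ ≤ ((B + 1) / c) ^ B * (exp (c * x) * exp (-(c * x))) := by gcongr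
    _ = ((B + 1) / c) ^ B := by rw [← exp_add, add_neg_cancel, exp_zero, mul_one]

noncomputable def laplaceKernel (b a v : ℝ) : ℝ :=
  (1 + v / a) ^ b * exp (-v ^ 2 / (1 + v / a))

lemma one_add_div_pos {a v : ℝ} (ha : 0 < a) (hav : -a < v) : 0 < 1 + v / a := by
  have : -1 < v / a := by rw [lt_div_iff₀ ha]; linarith
  linarith

lemma tendsto_laplaceKernel (b v : ℝ) :
    Tendsto (fun a => laplaceKernel b a v) atTop (𝓝 (exp (-v ^ 2))) := by
  have hu : Tendsto (fun a : ℝ => 1 + v / a) atTop (𝓝 1) := by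
    simpa using
      tendsto_const_nhds.add (tendsto_const_nhds.div_atTop tendsto_id : Tendsto (v / ·) _ _)
  simpa [laplaceKernel] using
    (hu.rpow_const (Or.inl one_ne_zero)).mul ((tendsto_const_nhds.div hu one_ne_zero).rexp)

lemma laplaceKernel_le_of_pos {b a v : ℝ} (ha : 1 ≤ a) (hv : 0 < v) :
    laplaceKernel b a v ≤ exp (3 / 2) * (2 * (|b| + 1)) ^ |b| * exp (-(1 / 2) * v) := by
  set u := 1 + v / a
  have hv_div : v / a ≤ v := div_le_self hv.le ha
  have hu : 1 ≤ u := le_add_of_nonneg_right (by positivity)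
  have hpow : u ^ b ≤ (1 + v) ^ |b| :=
    (rpow_le_rpow_of_exponent_le hu (le_abs_self b)).trans
      (rpow_le_rpow (by linarith) (by linarith) (abs_nonneg b))
  have hexp : -v ^ 2 / u ≤ 1 - v := by
    rw [neg_div, neg_le, le_div_iff₀ (by linarith)]
    nlinarith
  have hM : (1 + v) ^ |b| * exp (-(1 / 2 * (1 + v))) ≤ (2 * (|b| + 1)) ^ |b| := by
    simpa [div_eq_mul_inv, mul_comm] using rpow_mul_exp_neg_mul_le (by linarith : 0 ≤ 1 + v)
      (abs_nonneg b) (by norm_num : (0 : ℝ) < 1 / 2)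
  calc laplaceKernel b a v ≤ (1 + v) ^ |b| * exp (1 - v) :=
        mul_le_mul hpow (exp_le_exp.2 hexp) (exp_pos _).le (by positivity)
    _ = exp (3 / 2) * ((1 + v) ^ |b| * exp (-(1 / 2 * (1 + v)))) * exp (-(1 / 2) * v) := by
        rw [show 1 - v = 3 / 2 + (-(1 / 2 * (1 + v)) + -(1 / 2) * v) by ring, exp_add, exp_add]
        ring
    _ ≤ exp (3 / 2) * (2 * (|b| + 1)) ^ |b| * exp (-(1 / 2) * v) := by gcongr

lemma laplaceKernel_le_of_nonpos {b a v : ℝ} (ha : 1 ≤ a) (hav : -a < v) (hv : v ≤ 0) :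
    laplaceKernel b a v ≤ exp 3 * (|b| + 1) ^ |b| * exp (-v ^ 2) := by
  set u := 1 + v / a with hu_def
  have hu0 : 0 < u := one_add_div_pos (by linarith) hav
  have hu1 : u ≤ 1 := by
    have : v / a ≤ 0 := div_nonpos_of_nonpos_of_nonneg hv (by linarith)
    linarith
  have hv_eq : v = a * (u - 1) := by rw [hu_def]; field_simp; ring
  have hpow : u ^ b ≤ u⁻¹ ^ |b| := by
    rw [inv_rpow hu0.le, ← rpow_neg hu0.le]
    exact rpow_le_rpow_of_exponent_ge hu0 hu1 (neg_abs_le b)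
  -- `v² / u = v² + a² (1 - u)³ / u` and `a² (1 - u)³ ≥ (1 - u)³ ≥ 1 - 3 u`
  have hexp : -v ^ 2 / u ≤ 3 + -(1 * u⁻¹) + -v ^ 2 := by
    rw [div_le_iff₀ hu0, hv_eq]
    field_simp
    nlinarith [mul_nonneg (mul_nonneg (sq_nonneg u) (by linarith : (0:ℝ) ≤ 3 - u)) hu0.le,
      mul_le_mul_of_nonneg_right (one_le_pow₀ (n := 2) ha)
        (pow_nonneg (by linarith : 0 ≤ 1 - u) 3)]
  have hM := rpow_mul_exp_neg_mul_le (inv_nonneg.2 hu0.le) (abs_nonneg b) one_pos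
  calc laplaceKernel b a v ≤ u⁻¹ ^ |b| * exp (3 + -(1 * u⁻¹) + -v ^ 2) :=
        mul_le_mul hpow (exp_le_exp.2 hexp) (exp_pos _).le (by positivity)
    _ = exp 3 * (u⁻¹ ^ |b| * exp (-(1 * u⁻¹))) * exp (-v ^ 2) := by
        rw [exp_add, exp_add]; ring
    _ ≤ exp 3 * (|b| + 1) ^ |b| * exp (-v ^ 2) := by rw [div_one] at hM; gcongr

noncomputable def laplaceKernelBound (b v : ℝ) : ℝ :=
  exp 3 * (|b| + 1) ^ |b| * exp (-v ^ 2) +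
    (Ioi 0).indicator (fun v => exp (3 / 2) * (2 * (|b| + 1)) ^ |b| * exp (-(1 / 2) * v)) v

lemma integrable_laplaceKernelBound (b : ℝ) : Integrable (laplaceKernelBound b) := by
  refine Integrable.add ?_ ((integrable_indicator_iff measurableSet_Ioi).2 ?_)
  · simpa using (integrable_exp_neg_mul_sq one_pos).const_mul (exp 3 * (|b| + 1) ^ |b|)
  · exact (exp_neg_integrableOn_Ioi 0 (by norm_num)).const_mul _

lemma norm_laplaceKernel_le {b a v : ℝ} (ha : 1 ≤ a) (hav : -a < v) :
    ‖laplaceKernel b a v‖ ≤ laplaceKernelBound b v := by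
  have hu := one_add_div_pos (by linarith) hav
  have hk : 0 ≤ laplaceKernel b a v := mul_nonneg (rpow_nonneg hu.le b) (exp_pos _).le
  rw [Real.norm_of_nonneg hk, laplaceKernelBound]
  rcases le_or_gt v 0 with hv | hv
  · rw [indicator_of_notMem (show v ∉ Ioi 0 from not_lt.2 hv), add_zero]
    exact laplaceKernel_le_of_nonpos ha hav hv
  · rw [indicator_of_mem (show v ∈ Ioi 0 from hv)]
    have := laplaceKernel_le_of_pos (b := b) ha hv
    have : 0 ≤ exp 3 * (|b| + 1) ^ |b| * exp (-v ^ 2) := by positivity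
    linarith

lemma tendsto_setIntegral_laplaceKernel (b : ℝ) {ι : Type*} {l : Filter ι}
    [l.IsCountablyGenerated]
    {a c : ι → ℝ} (ha : Tendsto a l atTop) (hc : Tendsto c l atTop) :
    Tendsto (fun i => ∫ v in Ioo (-a i) (c i), laplaceKernel b (a i) v) l (𝓝 √π) := by
  have hgauss : ∫ v, exp (-v ^ 2) = √π := by simpa using integral_gaussian 1
  simp_rw [← integral_indicator measurableSet_Ioo, ← hgauss]
  refine tendsto_integral_filter_of_dominated_convergence (laplaceKernelBound b)
    (.of_forall fun i => ?_) ?_ (integrable_laplaceKernelBound b) (.of_forall fun v => ?_)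
  · exact ((by unfold laplaceKernel; fun_prop : Measurable (laplaceKernel b (a i))).indicator
      measurableSet_Ioo).aestronglyMeasurable
  · filter_upwards [ha.eventually_ge_atTop 1] with i hi
    refine .of_forall fun v => ?_
    by_cases hv : v ∈ Ioo (-a i) (c i)
    · rw [indicator_of_mem hv]; exact norm_laplaceKernel_le hi hv.1
    · rw [indicator_of_notMem hv, norm_zero, laplaceKernelBound]
      exact add_nonneg (by positivity) (indicator_nonneg (fun _ _ => by positivity) _)
  · refine ((tendsto_laplaceKernel b v).comp ha).congr' ?_
    filter_upwards [ha.eventually_gt_atTop (-v), hc.eventually_gt_atTop v] with i hai hci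
    rw [indicator_of_mem (show v ∈ Ioo (-a i) (c i) from ⟨neg_lt.1 hai, hci⟩)]
    rfl

lemma integral_exp_neg_mul_rpow_exp_neg_div_eq (b : ℝ) {δ r C a s : ℝ} (hδ : 0 ≤ δ)
    (ha : 0 < a) (hs : 0 < s) (hr : r * s = a ^ 2) (hC : C = a ^ 2 * s) :
    ∫ t in Ioo 0 δ, exp (-r * t) * t ^ b * exp (-C / t) =
      s / a * s ^ b * exp (-(2 * a ^ 2)) *
        ∫ v in Ioo (-a) (a * (δ / s - 1)), laplaceKernel b a v := by
  set f := fun t => exp (-r * t) * t ^ b * exp (-C / t)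
  have hf : ∀ v ∈ Ioo (-a) (a * (δ / s - 1)),
      f (s / a * v + s) = s ^ b * exp (-(2 * a ^ 2)) * laplaceKernel b a v := by
    rintro v ⟨hv, -⟩
    have hu := one_add_div_pos ha hv
    have ht : s / a * v + s = s * (1 + v / a) := by field_simp; ring
    -- `r t + C / t = a² (u + 1 / u) = 2 a² + v² / u` for `t = s u`, `u = 1 + v / a`
    have hexp : exp (-r * (s * (1 + v / a))) * exp (-C / (s * (1 + v / a))) =
        exp (-(2 * a ^ 2)) * exp (-v ^ 2 / (1 + v / a)) := by
      have : a + v ≠ 0 := by linarith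
      rw [← exp_add, ← exp_add, hC, eq_div_of_mul_eq hs.ne' hr]
      congr 1
      field_simp
      ring
    simp only [f, laplaceKernel, ht, mul_rpow hs.le hu.le]
    linear_combination (s ^ b * (1 + v / a) ^ b) * hexp
  have hle : -a ≤ a * (δ / s - 1) := by
    have : 0 ≤ a * (δ / s) := by positivity
    linarith
  have hlo : s / a * -a + s = 0 := by field_simp; ring
  have hhi : s / a * (a * (δ / s - 1)) + s = δ := by field_simp; ring
  calc ∫ t in Ioo 0 δ, f t = ∫ t in (0)..δ, f t := by
        rw [intervalIntegral.integral_of_le hδ, integral_Ioc_eq_integral_Ioo]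
    _ = s / a * ∫ v in (-a)..(a * (δ / s - 1)), f (s / a * v + s) := by
        rw [intervalIntegral.integral_comp_mul_add f (by positivity), hlo, hhi, smul_eq_mul,
          ← mul_assoc, mul_inv_cancel₀ (by positivity), one_mul]
    _ = s / a * ∫ v in Ioo (-a) (a * (δ / s - 1)),
          s ^ b * exp (-(2 * a ^ 2)) * laplaceKernel b a v := by
        rw [intervalIntegral.integral_of_le hle, integral_Ioc_eq_integral_Ioo,
          setIntegral_congr_fun measurableSet_Ioo hf]
    _ = _ := by rw [integral_const_mul]; ring

lemma laplace_normalizer_eq (b : ℝ) {r C a s : ℝ} (ha : 0 < a) (hs : 0 < s)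
    (hr : r * s = a ^ 2) (hC : C = a ^ 2 * s) :
    √(π * C ^ ((2 * b + 1) / 2)) * r ^ ((-2 * b - 3) / 4) * exp (-√(4 * C * r)) =
      s / a * s ^ b * exp (-(2 * a ^ 2)) * √π := by
  have hr0 : 0 < r := pos_of_mul_pos_left (hr ▸ by positivity) hs.le
  have hC0 : 0 < C := hC ▸ by positivity
  have hsqrt : √(4 * C * r) = 2 * a ^ 2 := by
    rw [show 4 * C * r = (2 * a ^ 2) ^ 2 by rw [hC]; linear_combination 4 * a ^ 2 * hr,
      sqrt_sq (by positivity)]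
  have hsqrtC : √(C ^ ((2 * b + 1) / 2)) = C ^ ((2 * b + 1) / 4) := by
    rw [sqrt_eq_rpow, ← rpow_mul hC0.le]; ring_nf
  have hpow : C ^ ((2 * b + 1) / 4) * r ^ ((-2 * b - 3) / 4) = s / a * s ^ b := by
    have hlogr : log r + log s = 2 * log a := by
      rw [← log_mul hr0.ne' hs.ne', hr, log_pow]; norm_num
    have hlogC : log C = 2 * log a + log s := by
      rw [hC, log_mul (by positivity) hs.ne', log_pow]; norm_num
    refine log_injOn_pos (mem_Ioi.2 (by positivity)) (mem_Ioi.2 (by positivity)) ?_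
    rw [log_mul (by positivity) (by positivity), log_mul (by positivity) (by positivity),
      log_div hs.ne' ha.ne', log_rpow hC0, log_rpow hr0, log_rpow hs, hlogC]
    linear_combination (-(2 * b + 3) / 4) * hlogr
  rw [sqrt_mul pi_pos.le, hsqrtC, hsqrt, ← hpow]
  ring

/-- Laplace-method asymptotics: for `C > 0`, `δ > 0`, `b ∈ ℝ`,
`∫₀^δ e^{-rt} t^b e^{-C/t} dt ∼ √(π C^{(2b+1)/2}) r^{(-2b-3)/4} e^{-√(4Cr)}` as `r → ∞`. -/
theorem laplace_asymptotic (C δ b : ℝ) (hC : 0 < C) (hδ : 0 < δ) :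
    Tendsto (fun r : ℝ =>
        (∫ t in Ioo (0:ℝ) δ, Real.exp (-r * t) * t ^ b * Real.exp (-C / t)) /
          (Real.sqrt (π * C ^ ((2 * b + 1) / 2)) * r ^ ((-2 * b - 3) / 4) *
            Real.exp (-Real.sqrt (4 * C * r))))
      atTop (nhds 1) := by
  have hsC : 0 < √C := sqrt_pos.2 hC
  set s : ℝ → ℝ := fun r => √C / √r
  set a : ℝ → ℝ := fun r => √(√C * √r)
  have ha : Tendsto a atTop atTop :=
    tendsto_sqrt_atTop.comp (tendsto_sqrt_atTop.const_mul_atTop hsC)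
  have hc : Tendsto (fun r => a r * (δ / s r - 1)) atTop atTop := by
    refine ha.atTop_mul_atTop₀ (tendsto_atTop_add_const_right _ _ ?_)
    simpa only [s, div_div_eq_mul_div] using
      (tendsto_sqrt_atTop.const_mul_atTop hδ).atTop_div_const hsC
  have hlim := (tendsto_setIntegral_laplaceKernel b ha hc).div_const √π
  rw [div_self (sqrt_pos.2 pi_pos).ne'] at hlim
  refine hlim.congr' ?_
  filter_upwards [eventually_gt_atTop 0] with r hr
  have ha2 : a r ^ 2 = √C * √r := sq_sqrt (by positivity)
  have hrs : r * s r = a r ^ 2 := by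
    rw [ha2]; simp only [s]; field_simp; rw [sq_sqrt hr.le]
  have hCs : C = a r ^ 2 * s r := by
    rw [ha2]; simp only [s]; field_simp; rw [sq_sqrt hC.le]
  rw [integral_exp_neg_mul_rpow_exp_neg_div_eq b hδ.le (by positivity) (by positivity) hrs hCs,
    laplace_normalizer_eq b (by positivity) (by positivity) hrs hCs,
    mul_div_mul_left _ _ (by positivity)]
end

section
/- Suppose F_τ(t) ∼ A t^m e^{-C/t} and F_τ^{(k)}(t) ∼ B t^n e^{-C_k/t} as t → 0⁺, with A, B > 0, C_k > C > 0, m, n ∈ ℝ, and σ is uniformly distributed on [0, 2/r], independent of τ. Then P(κ = k | τ < σ) ∼ (B/A)·(C/C_k)·(r/2)^{m-n}·e^{-(C_k - C)r/2} as r → ∞. -/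
open MeasureTheory ProbabilityTheory Real Filter Set Topology Asymptotics

/-!
By independence and the uniform law of `σ` on `[0, 2/r]`,
`P(κ ∈ S, τ < σ) = (r/2) ∫₀^{2/r} P(τ ≤ s, κ ∈ S) ds`; strict and weak inequality agree for a.e. `s`
because `τ` has only countably many atoms. The integrand `s^m e^{-C/s} (1 + (m+2)s/C)` has the
explicit primitive `ε^{m+2} e^{-C/ε} / C`, and the correction factor tends to `1`, so integrating
`F(t) ∼ A t^m e^{-C/t}` gives `∫₀^ε F ∼ A ε^{m+2} e^{-C/ε} / C`. The factors `r/2` cancel in the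
conditional probability, and the ratio of the two primitives at `ε = 2/r` is the claimed asymptote.
-/

theorem tendsto_rpow_mul_exp_neg_div_nhdsGT_zero (a : ℝ) {C : ℝ} (hC : 0 < C) :
    Tendsto (fun t : ℝ => t ^ a * exp (-C / t)) (𝓝[>] 0) (𝓝 0) := by
  refine ((tendsto_rpow_mul_exp_neg_mul_atTop_nhds_zero (-a) C hC).comp
    tendsto_inv_nhdsGT_zero).congr' ?_
  filter_upwards [self_mem_nhdsWithin] with t (ht : 0 < t)
  simp [inv_rpow ht.le, rpow_neg ht.le, div_eq_mul_inv]

noncomputable def expNegDivDensity (C m s : ℝ) : ℝ := if 0 < s then s ^ m * exp (-C / s) else 0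

theorem expNegDivDensity_of_pos {C m s : ℝ} (hs : 0 < s) :
    expNegDivDensity C m s = s ^ m * exp (-C / s) :=
  if_pos hs

theorem continuous_expNegDivDensity (m : ℝ) {C : ℝ} (hC : 0 < C) :
    Continuous (expNegDivDensity C m) := by
  refine continuous_iff_continuousAt.2 fun x => ?_
  rcases lt_trichotomy x 0 with hx | rfl | hx
  · refine continuousAt_const.congr (f := fun _ => (0 : ℝ)) ?_
    filter_upwards [eventually_lt_nhds hx] with s hs
    exact (if_neg hs.not_gt).symm
  · refine continuousAt_iff_continuous_left_right.2 ⟨?_, ?_⟩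
    · exact continuousWithinAt_const.congr (fun s (hs : s ≤ 0) => if_neg hs.not_gt)
        (if_neg (lt_irrefl 0))
    · rw [← continuousWithinAt_Ioi_iff_Ici, ContinuousWithinAt, expNegDivDensity,
        if_neg (lt_irrefl 0)]
      exact (tendsto_rpow_mul_exp_neg_div_nhdsGT_zero m hC).congr'
        (eventually_nhdsWithin_of_forall fun s hs => (if_pos hs).symm)
  · have : ContinuousAt (fun s => s ^ m * exp (-C / s)) x :=
      (continuousAt_id.rpow_const (Or.inl hx.ne')).mul
        (continuousAt_const.div continuousAt_id hx.ne').rexp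
    exact this.congr (by filter_upwards [eventually_gt_nhds hx] with s hs using (if_pos hs).symm)

noncomputable def expNegDivScale (C m ε : ℝ) : ℝ := ε ^ (m + 2) * exp (-C / ε) / C

theorem hasDerivAt_expNegDivScale {C m ε : ℝ} (hC : C ≠ 0) (hε : 0 < ε) :
    HasDerivAt (expNegDivScale C m)
      (expNegDivDensity C m ε * (1 + (m + 2) * ε / C)) ε := by
  have hexp : HasDerivAt (fun s => exp (-C / s)) (exp (-C / ε) * (-C * -(ε ^ 2)⁻¹)) ε := by
    simpa only [div_eq_mul_inv] using ((hasDerivAt_inv hε.ne').const_mul (-C)).exp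
  have hpow := hasDerivAt_rpow_const (p := m + 2) (Or.inl hε.ne')
  refine ((hpow.mul hexp).div_const C).congr_deriv ?_
  rw [expNegDivDensity_of_pos hε, show m + 2 - 1 = m + 1 by ring, rpow_add hε, rpow_add hε,
    rpow_one, rpow_two]
  field_simp
  ring

theorem intervalIntegral_expNegDivDensity_mul {C m ε : ℝ} (hC : 0 < C) (hε : 0 < ε) :
    ∫ s in 0..ε, expNegDivDensity C m s * (1 + (m + 2) * s / C) = expNegDivScale C m ε := by
  have hcont : Continuous fun s => expNegDivDensity C m s * (1 + (m + 2) * s / C) :=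
    (continuous_expNegDivDensity m hC).mul (by fun_prop)
  have hlim : Tendsto (expNegDivScale C m) (𝓝[>] 0) (𝓝 0) := by
    have := (tendsto_rpow_mul_exp_neg_div_nhdsGT_zero (m + 2) hC).div_const C
    rwa [zero_div] at this
  rw [intervalIntegral.integral_eq_sub_of_hasDerivAt_of_tendsto hε
    (fun s hs => hasDerivAt_expNegDivScale hC.ne' hs.1) (hcont.intervalIntegrable 0 ε) hlim
    ((hasDerivAt_expNegDivScale hC.ne' hε).continuousAt.tendsto.mono_left nhdsWithin_le_nhds),
    sub_zero]

theorem expNegDivScale_div_expNegDivScale {C C' m n ε : ℝ} (hC : C ≠ 0) (hε : 0 < ε) :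
    expNegDivScale C' n ε / expNegDivScale C m ε = C / C' * ε ^ (n - m) * exp (-(C' - C) / ε) := by
  rw [expNegDivScale, expNegDivScale, show n + 2 = n - m + (m + 2) by ring,
    rpow_add hε, show -C' / ε = -(C' - C) / ε + -C / ε by ring, exp_add]
  have : 0 < ε ^ (m + 2) := by positivity
  field_simp

theorem Asymptotics.IsEquivalent.intervalIntegral_nhdsGT {f g : ℝ → ℝ} {a : ℝ}
    (hfg : f ~[𝓝[>] a] g) (hg : ∀ᶠ s in 𝓝[>] a, 0 ≤ g s)
    (hf : ∀ x, IntervalIntegrable f volume a x) (hgi : ∀ x, IntervalIntegrable g volume a x) :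
    (fun x => ∫ s in a..x, f s) ~[𝓝[>] a] fun x => ∫ s in a..x, g s := by
  refine IsLittleO.of_bound fun c hc => ?_
  obtain ⟨u, hu, hbound⟩ := mem_nhdsGT_iff_exists_Ioo_subset.1 ((hfg.isLittleO.bound hc).and hg)
  filter_upwards [Ioo_mem_nhdsGT hu] with x hx
  have hgx : ∀ s ∈ Ioc a x, ‖f s - g s‖ ≤ c * g s ∧ 0 ≤ g s := fun s hs => by
    obtain ⟨hfgs, hgs⟩ : ‖f s - g s‖ ≤ c * ‖g s‖ ∧ 0 ≤ g s := hbound ⟨hs.1, hs.2.trans_lt hx.2⟩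
    rw [Real.norm_of_nonneg hgs] at hfgs
    exact ⟨hfgs, hgs⟩
  have hint : 0 ≤ ∫ s in a..x, g s := by
    rw [intervalIntegral.integral_of_le hx.1.le]
    exact setIntegral_nonneg measurableSet_Ioc fun s hs => (hgx s hs).2
  calc ‖(∫ s in a..x, f s) - ∫ s in a..x, g s‖
      = ‖∫ s in a..x, (f s - g s)‖ := by rw [intervalIntegral.integral_sub (hf x) (hgi x)]
    _ ≤ ∫ s in a..x, c * g s :=
      intervalIntegral.norm_integral_le_of_norm_le hx.1.le
        (Eventually.of_forall fun s hs => (hgx s hs).1) ((hgi x).const_mul c)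
    _ = c * ‖∫ s in a..x, g s‖ := by
      rw [intervalIntegral.integral_const_mul, Real.norm_of_nonneg hint]

theorem isEquivalent_intervalIntegral_expNegDivScale {f : ℝ → ℝ} {A C m : ℝ} (hA : 0 < A)
    (hC : 0 < C) (hf : ∀ x, IntervalIntegrable f volume 0 x)
    (hfA : Tendsto (fun t => f t / (A * t ^ m * exp (-C / t))) (𝓝[>] 0) (𝓝 1)) :
    (fun ε => ∫ s in 0..ε, f s) ~[𝓝[>] 0] fun ε => A * expNegDivScale C m ε := by
  set ψ : ℝ → ℝ := fun s => A * (expNegDivDensity C m s * (1 + (m + 2) * s / C))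
  have hψ : Continuous ψ := continuous_const.mul
    ((continuous_expNegDivDensity m hC).mul (by fun_prop))
  have hcorr : Tendsto (fun s : ℝ => 1 + (m + 2) * s / C) (𝓝[>] 0) (𝓝 1) :=
    ((by fun_prop : Continuous fun s : ℝ => 1 + (m + 2) * s / C).tendsto' 0 1 (by simp))
      |>.mono_left nhdsWithin_le_nhds
  have hfψ : f ~[𝓝[>] 0] ψ := by
    have hmain : f ~[𝓝[>] 0] fun t => A * t ^ m * exp (-C / t) := isEquivalent_of_tendsto_one hfA
    have hone : (fun _ => (1 : ℝ)) ~[𝓝[>] 0] fun s => 1 + (m + 2) * s / C :=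
      ((isEquivalent_const_iff_tendsto one_ne_zero).2 hcorr).symm
    refine (hmain.mul hone).congr_left ?_ |>.congr_right ?_
    · exact Eventually.of_forall fun s => mul_one (f s)
    · filter_upwards [self_mem_nhdsWithin] with s (hs : 0 < s)
      simp only [Pi.mul_apply, ψ, expNegDivDensity_of_pos hs, mul_assoc]
  have hψnonneg : ∀ᶠ s in 𝓝[>] 0, 0 ≤ ψ s := by
    filter_upwards [self_mem_nhdsWithin, hcorr.eventually (eventually_gt_nhds zero_lt_one)]
      with s (hs : 0 < s) hcs
    simp only [ψ, expNegDivDensity_of_pos hs]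
    positivity
  have hint := hfψ.intervalIntegral_nhdsGT hψnonneg hf fun x => hψ.intervalIntegrable 0 x
  refine hint.congr_right ?_
  filter_upwards [self_mem_nhdsWithin] with ε hε
  rw [intervalIntegral.integral_const_mul, intervalIntegral_expNegDivDensity_mul hC hε]

section Independence

variable {Ω β : Type*} [MeasurableSpace Ω] [MeasurableSpace β] {μ : Measure Ω}
  {τ σ : Ω → ℝ} {κ : Ω → β}

theorem ProbabilityTheory.IndepFun.measure_mem_and_lt_eq_lintegral [IsFiniteMeasure μ]
    (hτ : Measurable τ) (hκ : Measurable κ) (hσ : Measurable σ)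
    (hind : IndepFun (fun ω => (τ ω, κ ω)) σ μ) {S : Set β} (hS : MeasurableSet S) :
    μ {ω | κ ω ∈ S ∧ τ ω < σ ω} = ∫⁻ s, μ {ω | κ ω ∈ S ∧ τ ω < s} ∂(μ.map σ) := by
  have hX : Measurable fun ω => (τ ω, κ ω) := hτ.prodMk hκ
  have hT : MeasurableSet {p : (ℝ × β) × ℝ | p.1.2 ∈ S ∧ p.1.1 < p.2} :=
    (measurable_snd.comp measurable_fst hS).inter
      (measurableSet_lt (measurable_fst.comp measurable_fst) measurable_snd)
  have hlaw := (indepFun_iff_map_prod_eq_prod_map_map hX.aemeasurable hσ.aemeasurable).1 hind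
  have h := Measure.map_apply (μ := μ) (hX.prodMk hσ) hT
  rw [hlaw, Measure.prod_apply_symm hT] at h
  refine h.symm.trans (lintegral_congr fun s => ?_)
  rw [Measure.map_apply hX]
  · rfl
  · exact (measurable_snd hS).inter (measurableSet_lt measurable_fst measurable_const)

theorem ae_measure_and_lt_eq_measure_and_le [SFinite μ] (hτ : Measurable τ) (P : Ω → Prop) :
    ∀ᵐ s ∂(volume : Measure ℝ), μ {ω | P ω ∧ τ ω < s} = μ {ω | P ω ∧ τ ω ≤ s} := by
  filter_upwards [(Measure.countable_meas_level_set_pos (μ := μ) hτ).ae_notMem volume] with s hs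
  have hatom : μ {ω | τ ω = s} = 0 := by simpa using hs
  refine le_antisymm (measure_mono fun ω hω => ⟨hω.1, hω.2.le⟩) ?_
  calc μ {ω | P ω ∧ τ ω ≤ s}
      ≤ μ ({ω | P ω ∧ τ ω < s} ∪ {ω | τ ω = s}) :=
        measure_mono fun ω ⟨hP, hle⟩ => hle.lt_or_eq.imp (fun h => ⟨hP, h⟩) id
    _ ≤ μ {ω | P ω ∧ τ ω < s} := by
        simpa [hatom] using measure_union_le (μ := μ) {ω | P ω ∧ τ ω < s} {ω | τ ω = s}

theorem toReal_measure_and_lt_eq_intervalIntegral [IsFiniteMeasure μ]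
    (hτ : Measurable τ) (hκ : Measurable κ) (hσ : Measurable σ)
    (hind : IndepFun (fun ω => (τ ω, κ ω)) σ μ) {S : Set β} (hS : MeasurableSet S)
    {b c : ℝ} (hb : 0 ≤ b) (hc : 0 ≤ c)
    (hσlaw : μ.map σ = ENNReal.ofReal c • volume.restrict (Icc 0 b)) :
    (μ {ω | κ ω ∈ S ∧ τ ω < σ ω}).toReal =
      c * ∫ s in 0..b, (μ {ω | τ ω ≤ s ∧ κ ω ∈ S}).toReal := by
  have hF : Monotone fun s => μ {ω | τ ω ≤ s ∧ κ ω ∈ S} :=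
    fun s t hst => measure_mono fun ω hω => ⟨hω.1.trans hst, hω.2⟩
  have hae : ∀ᵐ s ∂(volume : Measure ℝ),
      μ {ω | κ ω ∈ S ∧ τ ω < s} = μ {ω | τ ω ≤ s ∧ κ ω ∈ S} :=
    (ae_measure_and_lt_eq_measure_and_le hτ _).mono fun s hs =>
      hs.trans (congrArg μ (Set.ext fun ω => and_comm))
  rw [hind.measure_mem_and_lt_eq_lintegral hτ hκ hσ hS, hσlaw, lintegral_smul_measure,
    smul_eq_mul, ENNReal.toReal_mul, ENNReal.toReal_ofReal hc,
    lintegral_congr_ae (ae_restrict_of_ae hae),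
    ← integral_toReal hF.measurable.aemeasurable (ae_of_all _ fun s => measure_lt_top μ _),
    integral_Icc_eq_integral_Ioc, intervalIntegral.integral_of_le hb]

end Independence

theorem conditional_hitting_uniform_general
    {Ω : Type*} [MeasurableSpace Ω] (μ : Measure Ω) [IsProbabilityMeasure μ]
    (τ : Ω → ℝ) (κ : Ω → ℕ) (k : ℕ) (σ : ℝ → Ω → ℝ)
    (hτ : Measurable τ) (hκ : Measurable κ) (hσ : ∀ r, Measurable (σ r))
    (A B C Ck m n : ℝ)
    (hA : 0 < A) (hB : 0 < B) (hC : 0 < C) (hCk : C < Ck)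
    (hdist : ∀ r > 0, Measure.map (σ r) μ =
      ENNReal.ofReal (r / 2) • volume.restrict (Icc (0:ℝ) (2 / r)))
    (hindep : ∀ r > 0, IndepFun (fun ω => (τ ω, κ ω)) (σ r) μ)
    (hF : Tendsto (fun t => (μ {ω | τ ω ≤ t}).toReal /
        (A * t ^ m * Real.exp (-C / t))) (𝓝[>] 0) (𝓝 1))
    (hFk : Tendsto (fun t => (μ {ω | τ ω ≤ t ∧ κ ω = k}).toReal /
        (B * t ^ n * Real.exp (-Ck / t))) (𝓝[>] 0) (𝓝 1)) :
    Tendsto (fun r : ℝ =>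
        ((μ {ω | κ ω = k ∧ τ ω < σ r ω}).toReal / (μ {ω | τ ω < σ r ω}).toReal) /
          (B / A * (C / Ck) * (r / 2) ^ (m - n) * Real.exp (-(Ck - C) * r / 2)))
      atTop (𝓝 1) := by
  have hCk0 : 0 < Ck := hC.trans hCk
  have hrep : ∀ S : Set ℕ, MeasurableSet S → ∀ r > 0, (μ {ω | κ ω ∈ S ∧ τ ω < σ r ω}).toReal =
      r / 2 * ∫ s in 0..2 / r, (μ {ω | τ ω ≤ s ∧ κ ω ∈ S}).toReal := fun S hS r hr =>
    toReal_measure_and_lt_eq_intervalIntegral hτ hκ (hσ r) (hindep r hr) hS (by positivity)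
      (by positivity) (hdist r hr)
  have hcdf : ∀ (S : Set ℕ) x,
      IntervalIntegrable (fun s => (μ {ω | τ ω ≤ s ∧ κ ω ∈ S}).toReal) volume 0 x :=
    fun S x => Monotone.intervalIntegrable fun s t hst =>
      ENNReal.toReal_mono (measure_ne_top μ _) (measure_mono fun ω hω => ⟨hω.1.trans hst, hω.2⟩)
  have hI := isEquivalent_intervalIntegral_expNegDivScale hA hC (hcdf univ) (by simpa using hF)
  have hIk := isEquivalent_intervalIntegral_expNegDivScale hB hCk0 (hcdf {k}) hFk
  have h2r : Tendsto (fun r : ℝ => 2 / r) atTop (𝓝[>] 0) := by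
    refine (tendsto_inv_atTop_nhdsGT_zero.comp (tendsto_id.atTop_div_const two_pos)).congr ?_
    exact fun r => by simp
  refine (isEquivalent_iff_tendsto_one ?_).1
    (((hIk.div hI).comp_tendsto h2r).congr_left ?_ |>.congr_right ?_)
  · filter_upwards [eventually_gt_atTop 0] with r hr
    positivity
  · filter_upwards [eventually_gt_atTop 0] with r hr
    have h1 := hrep univ MeasurableSet.univ r hr
    have h2 : (μ {ω | κ ω = k ∧ τ ω < σ r ω}).toReal = _ :=
      hrep {k} (measurableSet_singleton k) r hr
    simp only [mem_univ, true_and, and_true] at h1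
    simp only [Function.comp, Pi.div_apply, mem_univ, and_true]
    rw [h1, h2, mul_div_mul_left _ _ (by positivity)]
  · filter_upwards [eventually_gt_atTop 0] with r hr
    simp only [Function.comp, Pi.div_apply]
    have hpow : (2 / r) ^ (n - m) = (r / 2) ^ (m - n) := by
      rw [← inv_div r 2, inv_rpow (by positivity), ← rpow_neg (by positivity), neg_sub]
    rw [mul_div_mul_comm, expNegDivScale_div_expNegDivScale hC.ne' (by positivity), hpow,
      div_div_eq_mul_div]
    ring

/-- Conditional hitting probability asymptotics under uniform resetting on `[0, 2/r]`:
if `F_τ(t) ∼ A t^m e^{-C/t}` and `F_τ^{(k)}(t) ∼ B t^n e^{-C_k/t}` as `t → 0⁺`, then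
`P(κ = k | τ < σ_r) ∼ (B/A)(C/C_k)(r/2)^{m-n} e^{-(C_k-C)r/2}` as `r → ∞`. -/
theorem conditional_hitting_uniform
    {Ω : Type*} [MeasurableSpace Ω] (μ : Measure Ω) [IsProbabilityMeasure μ]
    (τ : Ω → ℝ) (κ : Ω → ℕ) (k : ℕ) (σ : ℝ → Ω → ℝ)
    (hτ : Measurable τ) (hκ : Measurable κ) (hσ : ∀ r, Measurable (σ r))
    (hτpos : ∀ᵐ ω ∂μ, 0 < τ ω)
    (A B C Ck m n : ℝ)
    (hA : 0 < A) (hB : 0 < B) (hC : 0 < C) (hCk : C < Ck)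
    (hdist : ∀ r > 0, Measure.map (σ r) μ =
      ENNReal.ofReal (r / 2) • volume.restrict (Icc (0:ℝ) (2 / r)))
    (hindep : ∀ r > 0, IndepFun (fun ω => (τ ω, κ ω)) (σ r) μ)
    (hF : Tendsto (fun t => (μ {ω | τ ω ≤ t}).toReal /
        (A * t ^ m * Real.exp (-C / t))) (𝓝[>] 0) (𝓝 1))
    (hFk : Tendsto (fun t => (μ {ω | τ ω ≤ t ∧ κ ω = k}).toReal /
        (B * t ^ n * Real.exp (-Ck / t))) (𝓝[>] 0) (𝓝 1))
    (hppos : ∀ r > 0, 0 < (μ {ω | τ ω < σ r ω}).toReal)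
    (hpkpos : ∀ r > 0, 0 < (μ {ω | κ ω = k ∧ τ ω < σ r ω}).toReal) :
    Tendsto (fun r : ℝ =>
        ((μ {ω | κ ω = k ∧ τ ω < σ r ω}).toReal / (μ {ω | τ ω < σ r ω}).toReal) /
          (B / A * (C / Ck) * (r / 2) ^ (m - n) * Real.exp (-(Ck - C) * r / 2)))
      atTop (𝓝 1) :=
  conditional_hitting_uniform_general μ τ κ k σ hτ hκ hσ A B C Ck m n hA hB hC hCk hdist hindep hF
    hFk
end

section
/- Suppose F_τ(t) ∼ A t^m and F_τ^{(k)}(t) ∼ B t^n as t → 0⁺ with A, B > 0 and 0 < m ≤ n, and σ is gamma distributed with shape η > 0 and rate r > 0, independent of τ. Then P(κ = k | τ < σ) ∼ (B/A) · (Γ(n+η)/Γ(m+η)) · r^{m-n} as r → ∞. -/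
open MeasureTheory ProbabilityTheory Real Filter Set Topology

/-!
Conditioning on the independent clock, `P(κ = k, τ < σ) = E[F_τ^{(k)}(σ)]` (the gamma law has no
atoms, so `<` and `≤` may be exchanged), and substituting `σ = u / r` gives
`r^n E[F_τ^{(k)}(σ)] = Γ(η)⁻¹ ∫₀^∞ r^n F_τ^{(k)}(u / r) u^(η-1) e^(-u) du`.
A bounded function with `F(t) ∼ B t^n` at `0⁺` satisfies `F(t) ≤ K t^n` for all `t > 0`, so
dominated convergence gives the limit `B Γ(n+η) / Γ(η)`. Likewise `r^m P(τ < σ) → A Γ(m+η) / Γ(η)`,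
and the claim is the quotient of the two limits.
-/

theorem measure_prodMk_mem_eq_lintegral_of_indepFun {Ω β γ : Type*} [MeasurableSpace Ω]
    [MeasurableSpace β] [MeasurableSpace γ] {μ : Measure Ω} [IsFiniteMeasure μ]
    {X : Ω → β} {Y : Ω → γ} (hX : Measurable X) (hY : Measurable Y) (hXY : IndepFun X Y μ)
    {U : Set (β × γ)} (hU : MeasurableSet U) :
    μ {ω | (X ω, Y ω) ∈ U} = ∫⁻ y, μ {ω | (X ω, y) ∈ U} ∂(μ.map Y) := by
  have hlaw := (indepFun_iff_map_prod_eq_prod_map_map hX.aemeasurable hY.aemeasurable).mp hXY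
  calc μ {ω | (X ω, Y ω) ∈ U} = μ.map (fun ω => (X ω, Y ω)) U :=
        (Measure.map_apply (hX.prodMk hY) hU).symm
    _ = ∫⁻ y, μ.map X ((fun x => (x, y)) ⁻¹' U) ∂(μ.map Y) := by
        rw [hlaw, Measure.prod_apply_symm hU]
    _ = ∫⁻ y, μ {ω | (X ω, y) ∈ U} ∂(μ.map Y) := by
        refine lintegral_congr fun y => ?_
        exact Measure.map_apply hX (hU.preimage (measurable_id.prodMk measurable_const))

theorem lintegral_measure_lt_eq_lintegral_measure_le {α : Type*} [MeasurableSpace α]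
    (ρ : Measure α) (ν : Measure ℝ) [NullSingletonClass ν] (g : α → ℝ) :
    ∫⁻ s, ρ {a | g a < s} ∂ν = ∫⁻ s, ρ {a | g a ≤ s} ∂ν := by
  have hjumps : {s : ℝ | ρ {a | g a ≤ s} ≠ ρ {a | g a < s}}.Countable :=
    ((countable_meas_le_ne_meas_lt (R := ℝᵒᵈ) ρ (OrderDual.toDual ∘ g)).image
      OrderDual.ofDual).mono fun s hs => by exact ⟨OrderDual.toDual s, hs, rfl⟩
  refine lintegral_congr_ae ?_
  filter_upwards [measure_eq_zero_iff_ae_notMem.mp (hjumps.measure_zero ν)] with s hs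
  exact (not_ne_iff.mp hs).symm

theorem toReal_measure_mem_and_lt_eq_integral_of_indepFun {Ω β : Type*} [MeasurableSpace Ω]
    [MeasurableSpace β] {μ : Measure Ω} [IsFiniteMeasure μ] {X Y : Ω → ℝ} {W : Ω → β}
    (hX : Measurable X) (hY : Measurable Y) (hW : Measurable W)
    (hindep : IndepFun (fun ω => (X ω, W ω)) Y μ) {ν : Measure ℝ} [NullSingletonClass ν]
    (hY_law : μ.map Y = ν) {S : Set β} (hS : MeasurableSet S) :
    (μ {ω | W ω ∈ S ∧ X ω < Y ω}).toReal
      = ∫ s, (μ {ω | W ω ∈ S ∧ X ω ≤ s}).toReal ∂ν := by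
  subst hY_law
  have hU : MeasurableSet {p : (ℝ × β) × ℝ | p.1.2 ∈ S ∧ p.1.1 < p.2} :=
    (hS.preimage measurable_fst.snd).inter (measurableSet_lt measurable_fst.fst measurable_snd)
  have hWS : MeasurableSet (W ⁻¹' S) := hW hS
  have hrestrict : ∀ R : ℝ → Prop,
      μ {ω | W ω ∈ S ∧ R (X ω)} = μ.restrict (W ⁻¹' S) {ω | R (X ω)} := fun R => by
    rw [Measure.restrict_apply' hWS, Set.inter_comm]; rfl
  have hlintegral :
      μ {ω | W ω ∈ S ∧ X ω < Y ω} = ∫⁻ s, μ {ω | W ω ∈ S ∧ X ω ≤ s} ∂(μ.map Y) :=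
    calc μ {ω | W ω ∈ S ∧ X ω < Y ω} = ∫⁻ s, μ {ω | W ω ∈ S ∧ X ω < s} ∂(μ.map Y) :=
          measure_prodMk_mem_eq_lintegral_of_indepFun (hX.prodMk hW) hY hindep hU
      _ = ∫⁻ s, μ.restrict (W ⁻¹' S) {ω | X ω < s} ∂(μ.map Y) :=
          lintegral_congr fun s => hrestrict (· < s)
      _ = ∫⁻ s, μ.restrict (W ⁻¹' S) {ω | X ω ≤ s} ∂(μ.map Y) :=
          lintegral_measure_lt_eq_lintegral_measure_le _ _ X
      _ = ∫⁻ s, μ {ω | W ω ∈ S ∧ X ω ≤ s} ∂(μ.map Y) :=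
          lintegral_congr fun s => (hrestrict (· ≤ s)).symm
  have hmono : Monotone fun s => μ {ω | W ω ∈ S ∧ X ω ≤ s} :=
    fun a b hab => measure_mono fun ω hω => ⟨hω.1, hω.2.trans hab⟩
  rw [hlintegral, integral_toReal hmono.measurable.aemeasurable
    (ae_of_all _ fun _ => measure_lt_top μ _)]

theorem gammaPDFReal_div_of_pos {η r u : ℝ} (hr : 0 < r) (hu : 0 < u) :
    gammaPDFReal η r (u / r) = r / Gamma η * (u ^ (η - 1) * exp (-u)) := by
  have hr_pow : r ^ η = r * r ^ (η - 1) := by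
    conv_lhs => rw [← add_sub_cancel 1 η, rpow_add hr, rpow_one]
  rw [gammaPDFReal, if_pos (div_pos hu hr).le, mul_div_cancel₀ _ hr.ne', div_rpow hu.le hr.le,
    hr_pow]
  have : r ^ (η - 1) ≠ 0 := (rpow_pos_of_pos hr _).ne'
  field_simp

instance nullSingletonClass_gammaMeasure (η r : ℝ) : NullSingletonClass (gammaMeasure η r) :=
  nullSingletonClass_withDensity _

theorem integral_gammaMeasure_eq {η r : ℝ} (hη : 0 < η) (hr : 0 < r) (f : ℝ → ℝ) :
    ∫ s, f s ∂(gammaMeasure η r)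
      = (Gamma η)⁻¹ * ∫ u in Ioi 0, f (u / r) * u ^ (η - 1) * exp (-u) := by
  have hpdf_zero : ∀ s < 0, gammaPDFReal η r s = 0 := fun s hs => if_neg hs.not_ge
  calc ∫ s, f s ∂(gammaMeasure η r) = ∫ s, gammaPDFReal η r s * f s := by
        rw [gammaMeasure, integral_withDensity_eq_integral_toReal_smul
          (show Measurable (gammaPDF η r) from (measurable_gammaPDFReal η r).ennreal_ofReal)
          (ae_of_all _ fun _ => ENNReal.ofReal_lt_top)]
        simp only [gammaPDF, ENNReal.toReal_ofReal (gammaPDFReal_nonneg hη hr _), smul_eq_mul]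
    _ = ∫ s in Ioi 0, gammaPDFReal η r s * f s := by
        rw [← integral_Ici_eq_integral_Ioi]
        refine (setIntegral_eq_integral_of_forall_compl_eq_zero fun s hs => ?_).symm
        rw [hpdf_zero s (by simpa using hs), zero_mul]
    _ = r⁻¹ * ∫ u in Ioi 0, gammaPDFReal η r (u / r) * f (u / r) := by
        have hsubst := integral_comp_mul_left_Ioi
          (fun u => gammaPDFReal η r (u / r) * f (u / r)) 0 hr
        rw [mul_zero, smul_eq_mul] at hsubst
        simp only [← hsubst, mul_div_cancel_left₀ _ hr.ne']
    _ = (Gamma η)⁻¹ * ∫ u in Ioi 0, f (u / r) * u ^ (η - 1) * exp (-u) := by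
        rw [← integral_const_mul, ← integral_const_mul]
        refine setIntegral_congr_fun measurableSet_Ioi fun u hu => ?_
        rw [gammaPDFReal_div_of_pos hr hu]
        field_simp

theorem exists_abs_le_mul_rpow_of_tendsto {f : ℝ → ℝ} {C q M : ℝ} (hC : C ≠ 0) (hq : 0 ≤ q)
    (hM : ∀ t, |f t| ≤ M) (hlim : Tendsto (fun t => f t / (C * t ^ q)) (𝓝[>] 0) (𝓝 1)) :
    ∃ K, ∀ t, 0 < t → |f t| ≤ K * t ^ q := by
  obtain ⟨δ, hδ, hnear⟩ : ∃ δ > 0, ∀ t ∈ Ioc 0 δ, |f t / (C * t ^ q)| < 2 :=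
    mem_nhdsGT_iff_exists_Ioc_subset.mp
      (hlim.abs.eventually_lt_const (by norm_num : |(1 : ℝ)| < 2))
  refine ⟨max (2 * |C|) (M * δ⁻¹ ^ q), fun t ht => ?_⟩
  have htq : 0 < t ^ q := rpow_pos_of_pos ht q
  rcases le_or_gt t δ with htδ | htδ
  · have hCt : 0 < |C * t ^ q| := abs_pos.mpr (mul_ne_zero hC htq.ne')
    have := hnear t ⟨ht, htδ⟩
    rw [abs_div, div_lt_iff₀ hCt, abs_mul, abs_of_pos htq] at this
    nlinarith [le_max_left (2 * |C|) (M * δ⁻¹ ^ q)]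
  · have hM0 : 0 ≤ M := (abs_nonneg _).trans (hM 0)
    have hgrowth : 1 ≤ δ⁻¹ ^ q * t ^ q := by
      rw [← mul_rpow (by positivity) ht.le]
      exact one_le_rpow (by rw [inv_mul_eq_div, one_le_div hδ]; exact htδ.le) hq
    calc |f t| ≤ M * (δ⁻¹ ^ q * t ^ q) := (hM t).trans (le_mul_of_one_le_right hM0 hgrowth)
      _ = M * δ⁻¹ ^ q * t ^ q := by ring
      _ ≤ max (2 * |C|) (M * δ⁻¹ ^ q) * t ^ q := by gcongr; exact le_max_right _ _

theorem tendsto_rpow_mul_setIntegral_comp_div_rpow_mul_exp {f : ℝ → ℝ} {C q η M : ℝ}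
    (hf : Measurable f) (hM : ∀ t, |f t| ≤ M) (hC : C ≠ 0) (hq : 0 ≤ q) (hη : 0 < η)
    (hlim : Tendsto (fun t => f t / (C * t ^ q)) (𝓝[>] 0) (𝓝 1)) :
    Tendsto (fun r => r ^ q * ∫ u in Ioi 0, f (u / r) * u ^ (η - 1) * exp (-u))
      atTop (𝓝 (C * Gamma (q + η))) := by
  obtain ⟨K, hK⟩ := exists_abs_le_mul_rpow_of_tendsto hC hq hM hlim
  have hsplit : ∀ u : ℝ, 0 < u → u ^ (q + η - 1) = u ^ q * u ^ (η - 1) := fun u hu => by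
    rw [add_sub_assoc, rpow_add hu]
  have hlimit : C * Gamma (q + η) = ∫ u in Ioi 0, C * (u ^ q * (u ^ (η - 1) * exp (-u))) := by
    rw [Gamma_eq_integral (by positivity), ← integral_const_mul]
    refine setIntegral_congr_fun measurableSet_Ioi fun u hu => ?_
    rw [hsplit u hu]
    ring
  simp_rw [← integral_const_mul]
  rw [hlimit]
  refine tendsto_integral_filter_of_dominated_convergence
    (fun u => K * (exp (-u) * u ^ (q + η - 1))) ?_ ?_
    ((GammaIntegral_convergent (by positivity)).const_mul K) ?_
  · exact .of_forall fun r => (((hf.comp (measurable_id.div_const r)).mul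
      (measurable_id.pow_const _)).mul (measurable_neg.exp)).const_mul _ |>.aestronglyMeasurable
  · filter_upwards [eventually_gt_atTop 0] with r hr
    refine (ae_restrict_iff' measurableSet_Ioi).mpr (.of_forall fun u (hu : 0 < u) => ?_)
    have hbound := hK (u / r) (div_pos hu hr)
    rw [div_rpow hu.le hr.le, mul_div_assoc', le_div_iff₀ (rpow_pos_of_pos hr q)] at hbound
    rw [norm_mul, norm_mul, norm_mul, Real.norm_of_nonneg (rpow_pos_of_pos hr q).le,
      Real.norm_of_nonneg (rpow_pos_of_pos hu _).le, Real.norm_of_nonneg (exp_pos _).le,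
      Real.norm_eq_abs, hsplit u hu]
    have := mul_le_mul_of_nonneg_right hbound (mul_nonneg (rpow_pos_of_pos hu (η - 1)).le
      (exp_pos (-u)).le)
    linarith
  · refine (ae_restrict_iff' measurableSet_Ioi).mpr (.of_forall fun u (hu : 0 < u) => ?_)
    have hdiv : Tendsto (fun r => u / r) atTop (𝓝[>] 0) :=
      tendsto_nhdsWithin_of_tendsto_nhds_of_eventually_within _
        (tendsto_const_nhds.div_atTop tendsto_id)
        (eventually_gt_atTop 0 |>.mono fun r hr => div_pos hu hr)
    have := (hlim.comp hdiv).mul_const (C * (u ^ q * (u ^ (η - 1) * exp (-u))))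
    rw [one_mul] at this
    refine this.congr' ?_
    filter_upwards [eventually_gt_atTop 0] with r hr
    have : r ^ q ≠ 0 := (rpow_pos_of_pos hr q).ne'
    have : u ^ q ≠ 0 := (rpow_pos_of_pos hu q).ne'
    simp only [Function.comp, div_rpow hu.le hr.le]
    field_simp

theorem tendsto_rpow_mul_integral_gammaMeasure {f : ℝ → ℝ} {C q η M : ℝ}
    (hf : Measurable f) (hM : ∀ t, |f t| ≤ M) (hC : C ≠ 0) (hq : 0 ≤ q) (hη : 0 < η)
    (hlim : Tendsto (fun t => f t / (C * t ^ q)) (𝓝[>] 0) (𝓝 1)) :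
    Tendsto (fun r => r ^ q * ∫ s, f s ∂(gammaMeasure η r))
      atTop (𝓝 (C * Gamma (q + η) / Gamma η)) := by
  have h := (tendsto_rpow_mul_setIntegral_comp_div_rpow_mul_exp hf hM hC hq hη hlim).const_mul
    (Gamma η)⁻¹
  rw [inv_mul_eq_div] at h
  refine h.congr' ?_
  filter_upwards [eventually_gt_atTop 0] with r hr
  rw [integral_gammaMeasure_eq hη hr]
  ring

theorem tendsto_rpow_mul_measure_mem_and_lt_of_gammaMeasure {Ω β : Type*} [MeasurableSpace Ω]
    [MeasurableSpace β] {μ : Measure Ω} [IsProbabilityMeasure μ] {X : Ω → ℝ} {W : Ω → β}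
    {Y : ℝ → Ω → ℝ} {S : Set β} {C q η : ℝ} (hX : Measurable X) (hW : Measurable W)
    (hY : ∀ r, Measurable (Y r)) (hS : MeasurableSet S) (hC : C ≠ 0) (hq : 0 ≤ q) (hη : 0 < η)
    (hY_law : ∀ r > 0, μ.map (Y r) = gammaMeasure η r)
    (hindep : ∀ r > 0, IndepFun (fun ω => (X ω, W ω)) (Y r) μ)
    (hlim : Tendsto (fun t => (μ {ω | W ω ∈ S ∧ X ω ≤ t}).toReal / (C * t ^ q))
      (𝓝[>] 0) (𝓝 1)) :
    Tendsto (fun r => r ^ q * (μ {ω | W ω ∈ S ∧ X ω < Y r ω}).toReal)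
      atTop (𝓝 (C * Gamma (q + η) / Gamma η)) := by
  have hmono : Monotone fun t => (μ {ω | W ω ∈ S ∧ X ω ≤ t}).toReal := fun a b hab =>
    ENNReal.toReal_mono (measure_ne_top μ _) (measure_mono fun ω hω => ⟨hω.1, hω.2.trans hab⟩)
  have hbound : ∀ t, |(μ {ω | W ω ∈ S ∧ X ω ≤ t}).toReal| ≤ 1 := fun t =>
    (abs_of_nonneg ENNReal.toReal_nonneg).trans_le measureReal_le_one
  refine (tendsto_rpow_mul_integral_gammaMeasure hmono.measurable hbound hC hq hη hlim).congr' ?_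
  filter_upwards [eventually_gt_atTop 0] with r hr
  rw [toReal_measure_mem_and_lt_eq_integral_of_indepFun hX (hY r) hW (hindep r hr) (hY_law r hr) hS]

theorem tendsto_div_div_mul_rpow_of_tendsto_rpow_mul {a b : ℝ → ℝ} {α β m n : ℝ}
    (ha : Tendsto (fun r => r ^ n * a r) atTop (𝓝 α))
    (hb : Tendsto (fun r => r ^ m * b r) atTop (𝓝 β)) (hα : α ≠ 0) (hβ : β ≠ 0) :
    Tendsto (fun r => a r / b r / (α / β * r ^ (m - n))) atTop (𝓝 1) := by
  have h := (ha.div hb hβ).mul_const (β / α)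
  rw [div_mul_div_cancel₀ hβ, div_self hα] at h
  refine h.congr' ?_
  filter_upwards [eventually_gt_atTop 0] with r hr
  simp only [Pi.div_apply, rpow_sub hr, div_eq_mul_inv, mul_inv, inv_inv]
  ring

theorem conditional_hitting_powerlaw_gamma_general
    {Ω : Type*} [MeasurableSpace Ω] (μ : Measure Ω) [IsProbabilityMeasure μ]
    (τ : Ω → ℝ) (κ : Ω → ℕ) (k : ℕ) (σ : ℝ → Ω → ℝ)
    (hτ : Measurable τ) (hκ : Measurable κ) (hσ : ∀ r, Measurable (σ r))
    (A B m n η : ℝ)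
    (hA : 0 < A) (hB : 0 < B) (hm : 0 < m) (hmn : m ≤ n) (hη : 0 < η)
    (hdist : ∀ r > 0, Measure.map (σ r) μ = gammaMeasure η r)
    (hindep : ∀ r > 0, IndepFun (fun ω => (τ ω, κ ω)) (σ r) μ)
    (hF : Tendsto (fun t => (μ {ω | τ ω ≤ t}).toReal / (A * t ^ m)) (𝓝[>] 0) (𝓝 1))
    (hFk : Tendsto (fun t => (μ {ω | τ ω ≤ t ∧ κ ω = k}).toReal / (B * t ^ n))
      (𝓝[>] 0) (𝓝 1)) :
    Tendsto (fun r : ℝ =>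
        ((μ {ω | κ ω = k ∧ τ ω < σ r ω}).toReal / (μ {ω | τ ω < σ r ω}).toReal) /
          (B / A * (Real.Gamma (n + η) / Real.Gamma (m + η)) * r ^ (m - n)))
      atTop (𝓝 1) := by
  have hP := tendsto_rpow_mul_measure_mem_and_lt_of_gammaMeasure hτ hκ hσ MeasurableSet.univ
    hA.ne' hm.le hη hdist hindep (by simpa only [mem_univ, true_and] using hF)
  have hPk := tendsto_rpow_mul_measure_mem_and_lt_of_gammaMeasure hτ hκ hσ
    (measurableSet_singleton k) hB.ne' (hm.trans_le hmn).le hη hdist hindep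
    (by simpa only [mem_singleton_iff, and_comm] using hFk)
  simp only [mem_univ, true_and, mem_singleton_iff] at hP hPk
  have hΓ : ∀ x > 0, Gamma x ≠ 0 := fun x hx => (Gamma_pos_of_pos hx).ne'
  have hratio := tendsto_div_div_mul_rpow_of_tendsto_rpow_mul hPk hP
    (div_ne_zero (mul_ne_zero hB.ne' (hΓ _ (by linarith))) (hΓ η hη))
    (div_ne_zero (mul_ne_zero hA.ne' (hΓ _ (by linarith))) (hΓ η hη))
  rwa [div_div_div_cancel_right₀ (hΓ η hη), mul_div_mul_comm] at hratio

/-- Conditional hitting probability asymptotics for power-law short-time behavior under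
gamma-distributed resetting: if `F_τ(t) ∼ A t^m` and `F_τ^{(k)}(t) ∼ B t^n` as `t → 0⁺`
with `0 < m ≤ n`, then `P(κ = k | τ < σ_r) ∼ (B/A)(Γ(n+η)/Γ(m+η)) r^{m-n}` as `r → ∞`. -/
theorem conditional_hitting_powerlaw_gamma
    {Ω : Type*} [MeasurableSpace Ω] (μ : Measure Ω) [IsProbabilityMeasure μ]
    (τ : Ω → ℝ) (κ : Ω → ℕ) (k : ℕ) (σ : ℝ → Ω → ℝ)
    (hτ : Measurable τ) (hκ : Measurable κ) (hσ : ∀ r, Measurable (σ r))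
    (hτpos : ∀ᵐ ω ∂μ, 0 < τ ω)
    (A B m n η : ℝ)
    (hA : 0 < A) (hB : 0 < B) (hm : 0 < m) (hmn : m ≤ n) (hη : 0 < η)
    (hdist : ∀ r > 0, Measure.map (σ r) μ = gammaMeasure η r)
    (hindep : ∀ r > 0, IndepFun (fun ω => (τ ω, κ ω)) (σ r) μ)
    (hF : Tendsto (fun t => (μ {ω | τ ω ≤ t}).toReal / (A * t ^ m)) (𝓝[>] 0) (𝓝 1))
    (hFk : Tendsto (fun t => (μ {ω | τ ω ≤ t ∧ κ ω = k}).toReal / (B * t ^ n))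
      (𝓝[>] 0) (𝓝 1))
    (hppos : ∀ r > 0, 0 < (μ {ω | τ ω < σ r ω}).toReal)
    (hpkpos : ∀ r > 0, 0 < (μ {ω | κ ω = k ∧ τ ω < σ r ω}).toReal) :
    Tendsto (fun r : ℝ =>
        ((μ {ω | κ ω = k ∧ τ ω < σ r ω}).toReal / (μ {ω | τ ω < σ r ω}).toReal) /
          (B / A * (Real.Gamma (n + η) / Real.Gamma (m + η)) * r ^ (m - n)))
      atTop (𝓝 1) :=
  conditional_hitting_powerlaw_gamma_general μ τ κ k σ hτ hκ hσ A B m n η hA hB hm hmn hη hdist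
    hindep hF hFk
end
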